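/- For all ψ ∈ 𝒮(ℝ²): ∫_{ℝ²} ψ_y·(∂_xΔψ)·ψ_x dxdy − ∫_{ℝ²} ψ_x·(∂_yΔψ)·ψ_x dxdy = −∫_{ℝ²} ψ_y·|∇ψ_x|² dxdy + ∫_{ℝ²} ψ_x·(∇ψ_x·∇ψ_y) dxdy. -/

import Mathlib

/-!
Moving everything to one side, the integrand `ψ_y ∂_xΔψ ψ_x - ψ_x ∂_yΔψ ψ_x + ψ_y |∇ψ_x|² -
ψ_x (∇ψ_x·∇ψ_y)` is the divergence of the Schwartz vector field `Φ_w = a b ∂_w a - a² ∂_w b`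
(`a = ψ_x`, `b = ψ_y`): this is the Leibniz rule together with the symmetry of mixed partials.
The derivative of a Schwartz function integrates to zero.
-/
open MeasureTheory Real

/-- Horizontal partial derivative `∂_x` of a function on `ℝ²`. -/
noncomputable def pd1 (f : ℝ × ℝ → ℝ) : ℝ × ℝ → ℝ := fun p => fderiv ℝ f p ((1 : ℝ), (0 : ℝ))

/-- Vertical partial derivative `∂_y` of a function on `ℝ²`. -/
noncomputable def pd2 (f : ℝ × ℝ → ℝ) : ℝ × ℝ → ℝ := fun p => fderiv ℝ f p ((0 : ℝ), (1 : ℝ))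

/-- The Laplacian `Δ = ∂_x² + ∂_y²` on `ℝ²`. -/
noncomputable def lap (f : ℝ × ℝ → ℝ) : ℝ × ℝ → ℝ := fun p => pd1 (pd1 f) p + pd2 (pd2 f) p

open scoped LineDeriv

theorem LineDeriv.lineDerivOp_sub {V E F : Type*} [AddCommGroup V] [AddCommGroup E]
    [AddCommGroup F] [LineDeriv V E F] [LineDerivAdd V E F] (v : V) (x y : E) :
    ∂_{v} (x - y) = ∂_{v} x - ∂_{v} y :=
  map_sub (AddMonoidHom.mk' ∂_{v} (LineDeriv.lineDerivOp_add v)) x y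

namespace SchwartzMap

variable {E F : Type*} [NormedAddCommGroup E] [NormedSpace ℝ E]
  [NormedAddCommGroup F] [NormedSpace ℝ F]

theorem lineDerivOp_lineDerivOp_comm (f : 𝓢(E, F)) (v w : E) :
    ∂_{v} (∂_{w} f) = ∂_{w} (∂_{v} f) := by
  ext x
  have hdiff : DifferentiableAt ℝ (fderiv ℝ f) x := (fderivCLM ℝ E F f).differentiableAt
  have hsymm : IsSymmSndFDerivAt ℝ f x :=
    (f.smooth 2).contDiffAt.isSymmSndFDerivAt (by norm_num)
  have second (v w : E) : ∂_{v} (∂_{w} f) x = fderiv ℝ (fderiv ℝ f) x v w := by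
    simp only [lineDerivOp_apply_eq_fderiv]
    rw [show ⇑(∂_{w} f : 𝓢(E, F)) = fun y => fderiv ℝ f y w from
        funext (lineDerivOp_apply_eq_fderiv w f),
      fderiv_clm_apply hdiff (differentiableAt_const w)]
    simp
  rw [second, second, hsymm.eq]

section Mul

variable {𝕜 : Type*} [NormedRing 𝕜] [NormedAlgebra ℝ 𝕜]

noncomputable instance : Mul 𝓢(E, 𝕜) :=
  ⟨fun f g => bilinLeftCLM (ContinuousLinearMap.mul ℝ 𝕜) g.hasTemperateGrowth f⟩

@[simp]
theorem mul_apply (f g : 𝓢(E, 𝕜)) (x : E) : (f * g) x = f x * g x := rfl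

theorem lineDerivOp_mul (f g : 𝓢(E, 𝕜)) (v : E) :
    ∂_{v} (f * g) = ∂_{v} f * g + f * ∂_{v} g := by
  ext x
  simp only [lineDerivOp_apply_eq_fderiv, add_apply, mul_apply]
  rw [show ⇑(f * g) = fun y => f y * g y from rfl,
    fderiv_fun_mul' f.differentiableAt g.differentiableAt]
  simp [add_comm]

end Mul

variable [MeasurableSpace E] [BorelSpace E] [FiniteDimensional ℝ E] {μ : Measure E}
  [μ.IsAddHaarMeasure]

theorem integral_lineDerivOp_eq_zero (f : 𝓢(E, F)) (v : E) : ∫ x, ∂_{v} f x ∂μ = 0 := by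
  have := integral_bilinear_hasLineDerivAt_right_eq_neg_left_of_integrable (μ := μ)
    (f := fun _ => (1 : ℝ)) (f' := fun _ => 0) (g := f) (g' := ⇑(∂_{v} f : 𝓢(E, F))) (v := v)
    (B := ContinuousLinearMap.lsmul ℝ ℝ) (by simp) (by simpa using (∂_{v} f).integrable)
    (by simpa using f.integrable) (fun x _ => (hasFDerivAt_const (1 : ℝ) x).hasLineDerivAt v)
    (fun x _ => (f.hasFDerivAt x).hasLineDerivAt v)
  simpa using this

end SchwartzMap

section CrossTerm

open SchwartzMap

variable {E : Type*} [NormedAddCommGroup E] [NormedSpace ℝ E]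

noncomputable def crossFlux (ψ : 𝓢(E, ℝ)) (u v w : E) : 𝓢(E, ℝ) :=
  ∂_{u} ψ * ∂_{v} ψ * ∂_{w} (∂_{u} ψ) - ∂_{u} ψ * ∂_{u} ψ * ∂_{w} (∂_{v} ψ)

theorem lineDerivOp_crossFlux_add (ψ : 𝓢(E, ℝ)) (u v x : E) :
    ∂_{u} (crossFlux ψ u v u) x + ∂_{v} (crossFlux ψ u v v) x =
      ∂_{v} ψ x * ∂_{u} (∂_{u} (∂_{u} ψ) + ∂_{v} (∂_{v} ψ)) x * ∂_{u} ψ x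
      - ∂_{u} ψ x * ∂_{v} (∂_{u} (∂_{u} ψ) + ∂_{v} (∂_{v} ψ)) x * ∂_{u} ψ x
      + ∂_{v} ψ x * ((∂_{u} (∂_{u} ψ) x) ^ 2 + (∂_{v} (∂_{u} ψ) x) ^ 2)
      - ∂_{u} ψ x * (∂_{u} (∂_{u} ψ) x * ∂_{u} (∂_{v} ψ) x
          + ∂_{v} (∂_{u} ψ) x * ∂_{v} (∂_{v} ψ) x) := by
  have h₁ : ∂_{u} (∂_{v} ψ) = ∂_{v} (∂_{u} ψ) := lineDerivOp_lineDerivOp_comm ψ u v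
  have h₂ : ∂_{u} (∂_{v} (∂_{v} ψ)) = ∂_{v} (∂_{v} (∂_{u} ψ)) := by
    rw [lineDerivOp_lineDerivOp_comm, h₁]
  have h₃ : ∂_{u} (∂_{v} (∂_{u} ψ)) = ∂_{v} (∂_{u} (∂_{u} ψ)) :=
    lineDerivOp_lineDerivOp_comm _ u v
  simp only [crossFlux, LineDeriv.lineDerivOp_sub, LineDeriv.lineDerivOp_add, lineDerivOp_mul,
    h₁, h₂, h₃, add_apply, sub_apply, mul_apply]
  ring

variable [MeasurableSpace E] [BorelSpace E] [FiniteDimensional ℝ E] {μ : Measure E}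
  [μ.IsAddHaarMeasure]

theorem integral_cross_term (ψ : 𝓢(E, ℝ)) (u v : E) :
    (∫ x, ∂_{v} ψ x * ∂_{u} (∂_{u} (∂_{u} ψ) + ∂_{v} (∂_{v} ψ)) x * ∂_{u} ψ x ∂μ)
      - (∫ x, ∂_{u} ψ x * ∂_{v} (∂_{u} (∂_{u} ψ) + ∂_{v} (∂_{v} ψ)) x * ∂_{u} ψ x ∂μ)
      = -(∫ x, ∂_{v} ψ x * ((∂_{u} (∂_{u} ψ) x) ^ 2 + (∂_{v} (∂_{u} ψ) x) ^ 2) ∂μ)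
        + ∫ x, ∂_{u} ψ x * (∂_{u} (∂_{u} ψ) x * ∂_{u} (∂_{v} ψ) x
            + ∂_{v} (∂_{u} ψ) x * ∂_{v} (∂_{v} ψ) x) ∂μ := by
  have hdiv : ∫ x, (∂_{u} (crossFlux ψ u v u) x + ∂_{v} (crossFlux ψ u v v) x) ∂μ = 0 := by
    rw [integral_add (∂_{u} (crossFlux ψ u v u)).integrable
      (∂_{v} (crossFlux ψ u v v)).integrable, integral_lineDerivOp_eq_zero,
      integral_lineDerivOp_eq_zero, add_zero]
  simp only [lineDerivOp_crossFlux_add] at hdiv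
  set a := ∂_{u} ψ
  set b := ∂_{v} ψ
  set L := ∂_{u} a + ∂_{v} b
  have i₁ : Integrable (fun x => b x * ∂_{u} L x * a x) μ := (b * ∂_{u} L * a).integrable
  have i₂ : Integrable (fun x => a x * ∂_{v} L x * a x) μ := (a * ∂_{v} L * a).integrable
  have i₃ : Integrable (fun x => b x * ((∂_{u} a x) ^ 2 + (∂_{v} a x) ^ 2)) μ := by
    simp only [sq]
    exact (b * (∂_{u} a * ∂_{u} a + ∂_{v} a * ∂_{v} a)).integrable
  have i₄ : Integrable (fun x => a x * (∂_{u} a x * ∂_{u} b x + ∂_{v} a x * ∂_{v} b x)) μ :=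
    (a * (∂_{u} a * ∂_{u} b + ∂_{v} a * ∂_{v} b)).integrable
  rw [integral_sub ?_ i₄, integral_add ?_ i₃, integral_sub i₁ i₂] at hdiv
  · linarith
  · exact i₁.sub i₂
  · exact (i₁.sub i₂).add i₃

end CrossTerm

/-- for a Schwartz function `ψ` on `ℝ²`,
`∫ ψ_y (∂_xΔψ) ψ_x − ∫ ψ_x (∂_yΔψ) ψ_x = −∫ ψ_y |∇ψ_x|² + ∫ ψ_x (∇ψ_x·∇ψ_y)`. -/
theorem cross_term_identity_psi (ψ : SchwartzMap (ℝ × ℝ) ℝ) :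
    (∫ p : ℝ × ℝ, pd2 (⇑ψ) p * pd1 (lap (⇑ψ)) p * pd1 (⇑ψ) p)
      - (∫ p : ℝ × ℝ, pd1 (⇑ψ) p * pd2 (lap (⇑ψ)) p * pd1 (⇑ψ) p)
      = -(∫ p : ℝ × ℝ,
            pd2 (⇑ψ) p * ((pd1 (pd1 (⇑ψ)) p) ^ 2 + (pd2 (pd1 (⇑ψ)) p) ^ 2))
        + ∫ p : ℝ × ℝ,
            pd1 (⇑ψ) p * (pd1 (pd1 (⇑ψ)) p * pd1 (pd2 (⇑ψ)) p
              + pd2 (pd1 (⇑ψ)) p * pd2 (pd2 (⇑ψ)) p) :=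
  integral_cross_term ψ (1, 0) (0, 1)
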